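/- arXiv:alg-geom/9510006 — 2 statements merged into one kernel-verified Lean document; each statement's English description precedes it below -/
import Mathlib

section
/- Let k be a field of characteristic p > 0. In k((t)), for any f ∈ k((t)) the residue of f^{p−1} df is zero; equivalently Res(f^{p−1} f' dt) = 0. -/
/-!
The residue of `f ^ m * f'` is an integer polynomial in the coefficients of `f`, so it suffices
to show that it vanishes for a generic Laurent series over the torsion-free ring `ℤ[X_n]`.
There `(m + 1) • (f ^ m * f') = (f ^ (m + 1))'` is a derivative, hence has no residue, and
`m + 1` can be cancelled.
-/

open HahnSeries

namespace LaurentSeries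

variable {R : Type*} [CommRing R]

theorem coeff_derivative (f : R⸨X⸩) (n : ℤ) :
    (derivative R f).coeff n = (n + 1) • f.coeff (n + 1) := by
  simp

theorem coeff_derivative_neg_one (f : R⸨X⸩) : (derivative R f).coeff (-1) = 0 := by
  simp

/-- The Euler operator `t d/dt`, which unlike `d/dt` preserves supports; this makes its Leibniz
rule a termwise identity `n = i + j` over one antidiagonal. -/
def eulerOp (f : R⸨X⸩) : R⸨X⸩ where
  coeff n := n • f.coeff n
  isPWO_support' := f.isPWO_support.mono fun n hn hf => hn <| by simp [hf]

theorem coeff_eulerOp (f : R⸨X⸩) (n : ℤ) : (eulerOp f).coeff n = n • f.coeff n := rfl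

theorem support_eulerOp_subset (f : R⸨X⸩) : (eulerOp f).support ⊆ f.support :=
  fun n hn hf => hn <| by rw [coeff_eulerOp, hf, smul_zero]

theorem eulerOp_mul (f g : R⸨X⸩) : eulerOp (f * g) = eulerOp f * g + f * eulerOp g := by
  ext n
  rw [coeff_add, coeff_eulerOp, coeff_mul, coeff_mul_left' f.isPWO_support
    (support_eulerOp_subset f), coeff_mul_right' g.isPWO_support (support_eulerOp_subset g),
    Finset.smul_sum, ← Finset.sum_add_distrib]
  refine Finset.sum_congr rfl fun ij hij => ?_
  rw [← (Finset.mem_antidiagonal.mp hij).2.2, coeff_eulerOp, coeff_eulerOp, add_smul,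
    smul_mul_assoc, mul_smul_comm]

theorem derivative_eq_single_mul_eulerOp (f : R⸨X⸩) :
    derivative R f = single (-1) 1 * eulerOp f := by
  ext n
  rw [coeff_derivative, ← add_neg_cancel_right n 1, coeff_single_mul_add, one_mul,
    coeff_eulerOp, neg_add_cancel_right]

theorem derivative_mul (f g : R⸨X⸩) :
    derivative R (f * g) = derivative R f * g + f * derivative R g := by
  simp only [derivative_eq_single_mul_eulerOp, eulerOp_mul]
  ring

theorem derivative_pow_succ (f : R⸨X⸩) (m : ℕ) :
    derivative R (f ^ (m + 1)) = (m + 1) • (f ^ m * derivative R f) := by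
  induction m with
  | zero => simp
  | succ m ih =>
    rw [pow_succ, derivative_mul, ih]
    simp only [nsmul_eq_mul]
    push_cast
    ring

theorem coeff_pow_mul_derivative_neg_one_of_isAddTorsionFree [IsAddTorsionFree R] (f : R⸨X⸩)
    (m : ℕ) : (f ^ m * derivative R f).coeff (-1) = 0 := by
  have h := congrArg (coeff · (-1)) (derivative_pow_succ f m)
  simp only [coeff_derivative_neg_one, coeff_nsmul, Pi.smul_apply] at h
  simpa using (nsmul_eq_zero_iff.mp h.symm)

variable {S : Type*} [CommRing S]

def mapRingHom (φ : R →+* S) : R⸨X⸩ →+* S⸨X⸩ where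
  toFun f := f.map φ
  map_one' := HahnSeries.map_one φ.toMonoidWithZeroHom
  map_mul' _ _ := HahnSeries.map_mul φ.toNonUnitalRingHom
  map_zero' := HahnSeries.map_zero φ.toZeroHom
  map_add' _ _ := HahnSeries.map_add φ.toAddMonoidHom

theorem coeff_mapRingHom (φ : R →+* S) (f : R⸨X⸩) (n : ℤ) :
    (mapRingHom φ f).coeff n = φ (f.coeff n) := rfl

theorem derivative_mapRingHom (φ : R →+* S) (f : R⸨X⸩) :
    derivative S (mapRingHom φ f) = mapRingHom φ (derivative R f) := by
  ext n
  rw [coeff_derivative, coeff_mapRingHom, coeff_mapRingHom, coeff_derivative, map_zsmul]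

/-- Every Laurent series is the image of one whose nonzero coefficients are distinct variables. -/
theorem exists_mapRingHom_eq (f : R⸨X⸩) :
    ∃ (F : (MvPolynomial ℤ ℤ)⸨X⸩) (φ : MvPolynomial ℤ ℤ →+* R), mapRingHom φ F = f := by
  classical
  refine ⟨⟨fun n => if f.coeff n = 0 then 0 else .X n, f.isPWO_support.mono fun n hn hf => hn <|
    by simp [hf]⟩, MvPolynomial.eval₂Hom (Int.castRingHom R) f.coeff, ?_⟩
  ext n
  rw [coeff_mapRingHom]
  by_cases hf : f.coeff n = 0 <;> simp [hf]

theorem coeff_pow_mul_derivative_neg_one (f : R⸨X⸩) (m : ℕ) :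
    (f ^ m * derivative R f).coeff (-1) = 0 := by
  obtain ⟨F, φ, rfl⟩ := exists_mapRingHom_eq f
  rw [derivative_mapRingHom, ← map_pow, ← map_mul, coeff_mapRingHom,
    coeff_pow_mul_derivative_neg_one_of_isAddTorsionFree, map_zero]

end LaurentSeries

theorem residue_pow_pred_mul_derivative_eq_zero_general
    (k : Type*) [Field k] (p : ℕ) (f : LaurentSeries k) :
    (f ^ (p - 1) * LaurentSeries.derivative k f).coeff (-1) = 0 :=
  LaurentSeries.coeff_pow_mul_derivative_neg_one f (p - 1)

/-- Over a field `k` of characteristic `p > 0`, for any formal Laurent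
series `f ∈ k((t))` the residue (the coefficient of `t⁻¹`) of `f^{p-1} · f' ` vanishes;
i.e. the differential `f^{p-1} df` has zero residue. -/
theorem residue_pow_pred_mul_derivative_eq_zero
    (k : Type*) [Field k] (p : ℕ) [Fact p.Prime] [CharP k p] (f : LaurentSeries k) :
    (f ^ (p - 1) * LaurentSeries.derivative k f).coeff (-1) = 0 :=
  residue_pow_pred_mul_derivative_eq_zero_general k p f
end

section
/- Let A be a commutative ring of characteristic p > 0. The map a ↦ class of a^{p−1}da defines an additive map A → H¹(Ω•_{A/ℤ}): for a, b ∈ A, (a+b)^{p−1} d(a+b) − a^{p−1} da − b^{p−1} db is an exact 1-form, namely it equals dc for c = (1/p)((a+b)^p − a^p − b^p) interpreted via the integral polynomial ((X+Y)^p − X^p − Y^p)/p evaluated at (a,b). -/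
open MvPolynomial

lemma cartier_aux {A M : Type*} [CommRing A] [AddCommGroup M] [Module A M]
    (D : Derivation ℤ A M) (v : Fin 2 → A) (P : MvPolynomial (Fin 2) ℤ) :
    D (MvPolynomial.aeval v P) = ∑ i, MvPolynomial.aeval v (pderiv i P) • D (v i) := by
  induction P using MvPolynomial.induction_on with
  | C n => simp
  | add p q hp hq => simp [hp, hq, Finset.sum_add_distrib, add_smul]
  | mul_X p i hpI =>
      simp only [map_mul, aeval_X, Derivation.leibniz, hpI, pderiv_mul, pderiv_X,
        Finset.smul_sum, map_add, add_smul, smul_eq_mul, map_smul]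
      rw [Finset.sum_add_distrib]
      congr 1
      · rw [Finset.sum_eq_single i]
        · simp
        · intro j _ hji; rw [Pi.single_eq_of_ne (Ne.symm hji)]; simp
        · simp
      · exact Finset.sum_congr rfl fun j _ => by rw [mul_smul]

/-- Let `A` be a commutative ring of characteristic `p > 0`.  The
assignment `a ↦ [a^{p-1} da]` is additive on de Rham cohomology classes: for `a, b ∈ A`
the difference `(a+b)^{p-1} d(a+b) − a^{p-1} da − b^{p-1} db` is an exact 1-form, equal
to `dc` where `c = C_p(a,b)` is the value at `(a,b)` of the integral polynomial
`C_p(X,Y) = ((X+Y)^p − X^p − Y^p)/p`. -/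
theorem cartier_additivity
    (A : Type*) [CommRing A] (p : ℕ) (hp : p.Prime) [CharP A p]
    (P : MvPolynomial (Fin 2) ℤ)
    (hP : (p : MvPolynomial (Fin 2) ℤ) * P = (X 0 + X 1) ^ p - (X 0) ^ p - (X 1) ^ p)
    (a b : A) :
    (a + b) ^ (p - 1) • KaehlerDifferential.D ℤ A (a + b)
        - a ^ (p - 1) • KaehlerDifferential.D ℤ A a
        - b ^ (p - 1) • KaehlerDifferential.D ℤ A b
      = KaehlerDifferential.D ℤ A (MvPolynomial.aeval ![a, b] P) := by
  have hpne : (p : MvPolynomial (Fin 2) ℤ) ≠ 0 := by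
    exact_mod_cast (Nat.cast_ne_zero (R := ℤ)).mpr hp.ne_zero
  have hd : ∀ i : Fin 2, pderiv i P = (X 0 + X 1) ^ (p - 1) - (X i) ^ (p - 1) := by
    intro i
    apply mul_left_cancel₀ hpne
    have := congrArg (pderiv i) hP
    rw [Derivation.leibniz] at this
    simp only [map_natCast, smul_eq_mul, mul_zero, add_zero, map_sub,
      Derivation.leibniz_pow, pderiv_X] at this
    fin_cases i <;> simp_all [Pi.single_apply, nsmul_eq_mul, smul_eq_mul] <;> ring_nf
  rw [cartier_aux (KaehlerDifferential.D ℤ A) ![a, b] P, Fin.sum_univ_two, hd 0, hd 1]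
  simp only [map_sub, map_pow, map_add, aeval_X, Matrix.cons_val_zero, Matrix.cons_val_one,
    Matrix.head_cons, map_add, sub_smul]
  module
end
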